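/- The Hessian determinant of û₀(x₁,x₂) = Re((x₁+ix₂)^{3/2}) satisfies det D²û₀(x) = −(9/16)·(x₁²+x₂²)^{−1/2} at every point off the branch cut; in particular √(x₁²+x₂²)·det D²û₀(x) = −9/16. -/

import Mathlib

/-!
If `h` is holomorphic and `u = Re (h (x₁ + i x₂))`, then `∂ᵥu = Re (v h')` for `v = v₁ + i v₂`,
so the Hessian of `u` is `[[Re h'', -Im h''], [-Im h'', -Re h'']]` and `det D²u = -|h''|²`.
For `h(z) = z^{3/2}` on the slit plane, `h'' = (3/4) z^{-1/2}`, whence `det D²u = -(9/16) |z|⁻¹`.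
-/

/-- The model solution `û₀(x₁,x₂) = Re((x₁+ix₂)^{3/2})` (principal branch). -/
noncomputable def uhat : ℝ × ℝ → ℝ :=
  fun p => (((p.1 : ℂ) + (p.2 : ℂ) * Complex.I) ^ ((3 : ℂ) / 2)).re

open Complex Filter Topology

local notation "ι" => (equivRealProdCLM.symm : (ℝ × ℝ) ≃L[ℝ] ℂ)

theorem fderiv_re_comp_equivRealProd_symm {h : ℂ → ℂ} {p : ℝ × ℝ}
    (hh : DifferentiableAt ℂ h (ι p)) (v : ℝ × ℝ) :
    fderiv ℝ (fun q => (h (ι q)).re) p v = (ι v * deriv h (ι p)).re := by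
  have hd : HasFDerivAt (fun q => (h (ι q)).re) _ p := reCLM.hasFDerivAt.comp p
    ((hh.hasDerivAt.hasFDerivAt.restrictScalars ℝ).comp p (ι).hasFDerivAt)
  rw [hd.fderiv]
  simp [mul_comm]

theorem fderiv_fderiv_re_comp_equivRealProd_symm {h : ℂ → ℂ} {p : ℝ × ℝ}
    (hh : ∀ᶠ z in 𝓝 (ι p), DifferentiableAt ℂ h z)
    (hh' : DifferentiableAt ℂ (deriv h) (ι p)) (v w : ℝ × ℝ) :
    fderiv ℝ (fun y => fderiv ℝ (fun q => (h (ι q)).re) y v) p w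
      = (ι w * ι v * deriv (deriv h) (ι p)).re := by
  have hfirst : (fun y => fderiv ℝ (fun q => (h (ι q)).re) y v)
      =ᶠ[𝓝 p] fun y => ((fun z => ι v * deriv h z) (ι y)).re := by
    filter_upwards [((ι).continuous.tendsto p).eventually hh] with y hy
    exact fderiv_re_comp_equivRealProd_symm hy v
  rw [hfirst.fderiv_eq, fderiv_re_comp_equivRealProd_symm (hh'.const_mul _),
    deriv_const_mul _ hh', mul_assoc]

theorem hessian_det_eq_neg_normSq {u : ℝ × ℝ → ℝ} {h : ℂ → ℂ} (hu : ∀ q, u q = (h (ι q)).re)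
    {p : ℝ × ℝ} (hh : ∀ᶠ z in 𝓝 (ι p), DifferentiableAt ℂ h z)
    (hh' : DifferentiableAt ℂ (deriv h) (ι p)) :
    fderiv ℝ (fun y => fderiv ℝ u y (1, 0)) p (1, 0) *
        fderiv ℝ (fun y => fderiv ℝ u y (0, 1)) p (0, 1) -
      fderiv ℝ (fun y => fderiv ℝ u y (0, 1)) p (1, 0) *
        fderiv ℝ (fun y => fderiv ℝ u y (1, 0)) p (0, 1)
      = -normSq (deriv (deriv h) (ι p)) := by
  obtain rfl : u = fun q => (h (ι q)).re := funext hu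
  simp only [fderiv_fderiv_re_comp_equivRealProd_symm hh hh']
  simp [equivRealProdCLM_symm_apply, normSq_apply]
  ring

theorem deriv_cpow_const_eventuallyEq {z : ℂ} (hz : z ∈ slitPlane) (c : ℂ) :
    deriv (fun w => w ^ c) =ᶠ[𝓝 z] fun w => c * w ^ (c - 1) := by
  filter_upwards [isOpen_slitPlane.mem_nhds hz] with w hw
  exact (hasStrictDerivAt_cpow_const hw).hasDerivAt.deriv

theorem deriv_deriv_cpow_const {z : ℂ} (hz : z ∈ slitPlane) (c : ℂ) :
    HasDerivAt (deriv fun w => w ^ c) (c * ((c - 1) * z ^ (c - 1 - 1))) z :=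
  ((hasStrictDerivAt_cpow_const hz).hasDerivAt.const_mul c).congr_of_eventuallyEq
    (deriv_cpow_const_eventuallyEq hz c)

theorem normSq_cpow_neg_half (z : ℂ) : normSq (z ^ (-1 / 2 : ℂ)) = ‖z‖⁻¹ := by
  rw [normSq_eq_norm_sq, show (-1 / 2 : ℂ) = ((-1 / 2 : ℝ) : ℂ) by push_cast; ring,
    norm_cpow_real, ← Real.rpow_natCast, ← Real.rpow_mul (norm_nonneg z)]
  norm_num [Real.rpow_neg_one]

/-- The Hessian determinant of `û₀` equals `−(9/16)(x₁²+x₂²)^{−1/2}` off the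
branch cut; in particular `√(x₁²+x₂²)·det D²û₀ = −9/16`. -/
theorem stmt3 (x : ℝ × ℝ) (hx : ¬ (x.2 = 0 ∧ x.1 ≤ 0))
    (d11 d12 d21 d22 : ℝ)
    (h11 : d11 = fderiv ℝ (fun y => fderiv ℝ uhat y (1, 0)) x (1, 0))
    (h12 : d12 = fderiv ℝ (fun y => fderiv ℝ uhat y (0, 1)) x (1, 0))
    (h21 : d21 = fderiv ℝ (fun y => fderiv ℝ uhat y (1, 0)) x (0, 1))
    (h22 : d22 = fderiv ℝ (fun y => fderiv ℝ uhat y (0, 1)) x (0, 1)) :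
    d11 * d22 - d12 * d21 = -(9 / 16) * (Real.sqrt (x.1 ^ 2 + x.2 ^ 2))⁻¹ ∧
      Real.sqrt (x.1 ^ 2 + x.2 ^ 2) * (d11 * d22 - d12 * d21) = -(9 / 16) := by
  have hz : ι x ∈ slitPlane := by
    rw [mem_slitPlane_iff]
    simpa [equivRealProdCLM_symm_apply, or_iff_not_imp_right, not_le] using hx
  have hnorm : Real.sqrt (x.1 ^ 2 + x.2 ^ 2) = ‖ι x‖ := by
    rw [equivRealProdCLM_symm_apply, norm_def, normSq_add_mul_I]
  have hpos : 0 < ‖ι x‖ := norm_pos_iff.mpr (slitPlane_ne_zero hz)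
  have hdiff : ∀ᶠ w in 𝓝 (ι x), DifferentiableAt ℂ (fun w : ℂ => w ^ (3 / 2 : ℂ)) w := by
    filter_upwards [isOpen_slitPlane.mem_nhds hz] with w hw
    exact (hasStrictDerivAt_cpow_const hw).hasDerivAt.differentiableAt
  have hdet := hessian_det_eq_neg_normSq (u := uhat)
    (fun q => by rw [equivRealProdCLM_symm_apply]; rfl) hdiff
    (deriv_deriv_cpow_const hz _).differentiableAt
  rw [(deriv_deriv_cpow_const hz _).deriv, ← h11, ← h12, ← h21, ← h22] at hdet
  have hdet' : d11 * d22 - d12 * d21 = -(9 / 16) * ‖ι x‖⁻¹ := by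
    rw [hdet, show (3 / 2 : ℂ) * ((3 / 2 - 1) * ι x ^ (3 / 2 - 1 - 1 : ℂ))
      = 3 / 4 * ι x ^ (-1 / 2 : ℂ) by norm_num; ring, normSq_mul, normSq_cpow_neg_half]
    norm_num
  rw [hnorm, hdet']
  exact ⟨rfl, by field_simp⟩
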